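/- arXiv:math/0201148 — 2 statements merged into one kernel-verified Lean document; each statement's English description precedes it below -/
import Mathlib

section
/- The number of parking functions on {1,…,n} is (n+1)^{n-1}. -/
/-!
Pollak's circular argument. Read preferences modulo `n + 1`. For `g : Fin n → ZMod (n + 1)` the
walk `surplus g m` (values of `g` among the residues of `0, …, m - 1`, minus `m`) drops by exactly
one over each period `n + 1`, because `g` has only `n` values; the translate `g + a` is a parking
function iff the walk started at `-a` never falls below its starting height within a period. By
the cycle lemma a walk losing one per period has exactly one such starting point in each period,
so every one of the `(n + 1) ^ n` functions has exactly one parking translate.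
-/

open Finset

section CycleLemma

variable {N : ℕ} {H : ℕ → ℤ}

theorem exists_lt_forall_le_add_of_add_period (hN : 0 < N) (hH : ∀ m, H (m + N) = H m - 1) :
    ∃ s < N, ∀ m < N, H s ≤ H (s + m) := by
  obtain ⟨x, hx, hxmin⟩ := (range N).exists_min_image H ⟨0, mem_range.mpr hN⟩
  have hex : ∃ s < N, H s = H x := ⟨x, mem_range.mp hx, rfl⟩
  -- The first minimiser beats the earlier values strictly, so also after they drop by one.
  set s := Nat.find hex
  obtain ⟨hsN, hsx⟩ : s < N ∧ H s = H x := Nat.find_spec hex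
  have hmin : ∀ y < N, H s ≤ H y := fun y hy => hsx ▸ hxmin y (mem_range.mpr hy)
  have hstrict : ∀ y < s, H s < H y := fun y hy =>
    lt_of_le_of_ne (hmin y (hy.trans hsN)) fun h => Nat.find_min hex hy ⟨hy.trans hsN, h ▸ hsx⟩
  refine ⟨s, hsN, fun m hm => ?_⟩
  rcases lt_or_ge (s + m) N with h | h
  · exact hmin _ h
  · have := hstrict (s + m - N) (by omega)
    rw [show s + m = s + m - N + N by omega, hH]
    omega

theorem eq_of_forall_le_add_of_add_period (hH : ∀ m, H (m + N) = H m - 1) {s s' : ℕ}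
    (hs : s < N) (hs' : s' < N) (h : ∀ m < N, H s ≤ H (s + m))
    (h' : ∀ m < N, H s' ≤ H (s' + m)) : s = s' := by
  wlog hlt : s < s' generalizing s s'
  · rcases (not_lt.mp hlt).eq_or_lt with heq | hgt
    · exact heq.symm
    · exact (this hs' hs h' h hgt).symm
  have h₁ := h (s' - s) (by omega)
  have h₂ := h' (s + N - s') (by omega)
  rw [show s + (s' - s) = s' by omega] at h₁
  rw [show s' + (s + N - s') = s + N by omega, hH] at h₂
  omega

end CycleLemma

theorem Nat.card_subtype_mul_card_eq_of_existsUnique_add {ι G : Type*} [Finite ι] [AddGroup G]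
    (P : (ι → G) → Prop) (hP : ∀ g, ∃! a, P (g + fun _ => a)) :
    Nat.card {h // P h} * Nat.card G = Nat.card G ^ Nat.card ι := by
  have hbij : Function.Bijective fun p : {h // P h} × G => p.1.1 - fun _ => p.2 := by
    constructor
    · rintro ⟨⟨h, hh⟩, a⟩ ⟨⟨h', hh'⟩, a'⟩ (heq : h - (fun _ => a) = h' - fun _ => a')
      have hP' : P ((h - fun _ => a) + fun _ => a') := by rwa [heq, sub_add_cancel]
      obtain rfl : a = a' := (hP _).unique (by rwa [sub_add_cancel]) hP'
      obtain rfl : h = h' := sub_left_injective heq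
      rfl
    · intro g
      obtain ⟨a, ha, -⟩ := hP g
      exact ⟨(⟨_, ha⟩, a), add_sub_cancel_right g _⟩
  rw [← Nat.card_prod, Nat.card_congr (Equiv.ofBijective _ hbij), Nat.card_fun]

theorem ZMod.val_sub_eq_iff {N : ℕ} [NeZero N] {x c : ZMod N} {t : ℕ} (ht : t < N) :
    (x - c).val = t ↔ x = c + t := by
  constructor
  · rintro rfl
    rw [ZMod.natCast_zmod_val, add_sub_cancel]
  · rintro rfl
    rw [add_sub_cancel_left, ZMod.val_natCast_of_lt ht]

namespace ParkingFunction

section Surplus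

variable {ι : Type*} [Fintype ι] {N : ℕ} [NeZero N]

theorem card_val_sub_lt (g : ι → ZMod N) (c : ZMod N) {m : ℕ} (hm : m ≤ N) :
    #{i | (g i - c).val < m} = ∑ t ∈ range m, #{i | g i = c + t} := by
  rw [card_eq_sum_card_fiberwise (f := fun i => (g i - c).val) (t := range m)
    (fun i hi => mem_range.mpr (mem_filter.mp hi).2)]
  refine sum_congr rfl fun t ht => ?_
  rw [mem_range] at ht
  rw [filter_filter]
  refine congrArg card (filter_congr fun i _ => ?_)
  rw [← ZMod.val_sub_eq_iff (ht.trans_le hm)]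
  exact and_iff_right_of_imp fun h => h.trans_lt ht

def surplus (g : ι → ZMod N) (m : ℕ) : ℤ :=
  ∑ t ∈ range m, (#{i | g i = t} : ℤ) - m

theorem surplus_add_sub (g : ι → ZMod N) (s : ℕ) {m : ℕ} (hm : m ≤ N) :
    surplus g (s + m) - surplus g s = #{i | (g i - s).val < m} - m := by
  rw [card_val_sub_lt g _ hm, surplus, surplus, sum_range_add]
  push_cast
  ring

theorem surplus_add_period (g : ι → ZMod N) (m : ℕ) :
    surplus g (m + N) = surplus g m + Fintype.card ι - N := by
  have h := surplus_add_sub g m le_rfl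
  simp only [ZMod.val_lt, filter_true, card_univ] at h
  linarith

end Surplus

section Parking

variable {ι : Type*} [Fintype ι] {n : ℕ}

def IsParking (n : ℕ) (f : ι → ℕ) : Prop :=
  ∀ k < n, k + 1 ≤ #{i | f i ≤ k}

theorem IsParking.lt (hι : Fintype.card ι = n) {f : ι → ℕ} (hf : IsParking n f) (i : ι) :
    f i < n := by
  by_contra! hi
  have hpos : 0 < n := hι ▸ Fintype.card_pos_iff.mpr ⟨i⟩
  have hcard : #{j | f j ≤ n - 1} < n :=
    hι ▸ card_lt_univ_of_notMem (x := i) fun h => by have := (mem_filter.mp h).2; omega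
  have := hf (n - 1) (by omega)
  omega

theorem isParking_finVal_iff (f : ι → Fin n) :
    IsParking n (fun i => (f i : ℕ)) ↔ ∀ k : Fin n, (k : ℕ) + 1 ≤ #{i | f i ≤ k} := by
  simp only [IsParking, Fin.forall_iff, Fin.le_def]

theorem isParking_add_iff (g : ι → ZMod (n + 1)) (a : ZMod (n + 1)) :
    IsParking n (fun i => (g i + a).val) ↔
      ∀ m < n + 1, surplus g (-a).val ≤ surplus g ((-a).val + m) := by
  have hsurplus : ∀ k < n, surplus g ((-a).val + (k + 1)) - surplus g (-a).val =
      #{i | (g i + a).val ≤ k} - (k + 1) := fun k hk => by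
    rw [surplus_add_sub g _ (by omega), ZMod.natCast_zmod_val]
    simp only [sub_neg_eq_add, Nat.lt_succ_iff]
    push_cast
    rfl
  simp only [IsParking]
  constructor
  · rintro hpark (_ | k) hk
    · simp
    · have := hsurplus k (by omega)
      have := hpark k (by omega)
      omega
  · intro hgood k hk
    have := hsurplus k hk
    have := hgood (k + 1) (by omega)
    omega

theorem existsUnique_isParking_add (hι : Fintype.card ι = n) (g : ι → ZMod (n + 1)) :
    ∃! a : ZMod (n + 1), IsParking n (fun i => (g i + a).val) := by
  have hperiod : ∀ m, surplus g (m + (n + 1)) = surplus g m - 1 := fun m => by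
    rw [surplus_add_period, hι]
    push_cast
    ring
  obtain ⟨s, hs, hgood⟩ := exists_lt_forall_le_add_of_add_period n.succ_pos hperiod
  refine ⟨-(s : ZMod (n + 1)), ?_, fun a ha => ?_⟩
  · dsimp only
    rwa [isParking_add_iff, neg_neg, ZMod.val_natCast_of_lt hs]
  have := eq_of_forall_le_add_of_add_period hperiod (ZMod.val_lt _) hs
    ((isParking_add_iff g a).mp ha) hgood
  rw [← this, ZMod.natCast_zmod_val, neg_neg]

end Parking

def finParkingEquiv (n : ℕ) :
    {f : Fin n → Fin n // ∀ k : Fin n, (k : ℕ) + 1 ≤ #{i | f i ≤ k}} ≃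
      {h : Fin n → ZMod (n + 1) // IsParking n fun i => (h i).val} where
  toFun f := ⟨fun i => (f.1 i : ℕ), by
    simpa only [ZMod.val_natCast_of_lt (Nat.lt_succ_of_lt (f.1 _).isLt), isParking_finVal_iff]
      using f.2⟩
  invFun h := ⟨fun i => ⟨(h.1 i).val, h.2.lt (Fintype.card_fin n) i⟩, by
    simpa only [← isParking_finVal_iff] using h.2⟩
  left_inv f := by ext i; simp [ZMod.val_natCast_of_lt (Nat.lt_succ_of_lt (f.1 i).isLt)]
  right_inv h := by ext i; simp

end ParkingFunction

/-- The number of parking functions on {1,…,n} is (n+1)^(n-1).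
A function f : Fin n → Fin n is a parking function if for each k, at least
k+1 of the values f i are ≤ k (0-indexed version of |f⁻¹({1,…,k})| ≥ k). -/
theorem stmt_2 (n : ℕ) :
    Fintype.card {f : Fin n → Fin n //
      ∀ k : Fin n, (k : ℕ) + 1 ≤ (Finset.univ.filter (fun i => f i ≤ k)).card} =
      (n + 1) ^ (n - 1) := by
  have hcount := Nat.card_subtype_mul_card_eq_of_existsUnique_add
    (fun h : Fin n → ZMod (n + 1) => ParkingFunction.IsParking n fun i => (h i).val)
    (ParkingFunction.existsUnique_isParking_add (Fintype.card_fin n))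
  rw [Nat.card_zmod, Nat.card_eq_fintype_card (α := Fin n), Fintype.card_fin] at hcount
  rw [Fintype.card_eq_nat_card, Nat.card_congr (ParkingFunction.finParkingEquiv n)]
  refine Nat.eq_of_mul_eq_mul_right n.succ_pos (hcount.trans ?_)
  cases n <;> simp [pow_succ]
end

section
/- The space of diagonal harmonics DH_n = {f ∈ C[x,y] : p(∂x,∂y)f = 0 for all p ∈ m} is closed under each polarization operator E_k = Σ_{i=1}^n y_i ∂x_i^k for k > 0. -/
/-!
Since partial derivatives commute, `p ↦ p(∂)` is an algebra homomorphism, and the Leibniz rule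
gives `[p(∂), y_i] = (∂_{y_i} p)(∂)`. Hence for `p ∈ 𝔪`,
`p(∂) (E_k f) = Σ_i y_i ∂_{x_i}^k (p(∂) f) + q(∂) f` with `q = Σ_i ∂_{y_i} p · x_i^k`.
The polynomial `q` is again diagonally invariant, and has no constant term because `k > 0`,
so both terms vanish when `f` is a diagonal harmonic.
-/

open MvPolynomial

noncomputable section

/-- The differential operator p(∂) applied to f. -/
def apolar {σ : Type} [Fintype σ] (g f : MvPolynomial σ ℂ) : MvPolynomial σ ℂ :=
  ∑ m ∈ g.support, g.coeff m •
    (((Finset.univ : Finset σ).toList.map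
      (fun i => ((pderiv i).toLinearMap : Module.End ℂ (MvPolynomial σ ℂ)) ^ m i)).prod f)

/-- p is a diagonal S_n-invariant with zero constant term (an element of 𝔪). -/
def InM (n : ℕ) (p : MvPolynomial (Fin n ⊕ Fin n) ℂ) : Prop :=
  (∀ σ : Equiv.Perm (Fin n), rename (Sum.map ⇑σ ⇑σ) p = p) ∧ constantCoeff p = 0

/-- The space of diagonal harmonics DH_n. -/
def DH (n : ℕ) : Set (MvPolynomial (Fin n ⊕ Fin n) ℂ) :=
  {f | ∀ p, InM n p → apolar p f = 0}

/-- The polarization operator E_k = Σᵢ yᵢ ∂xᵢᵏ. -/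
def Ek (n k : ℕ) (f : MvPolynomial (Fin n ⊕ Fin n) ℂ) :
    MvPolynomial (Fin n ⊕ Fin n) ℂ :=
  ∑ i : Fin n, X (Sum.inr i) *
    ((((pderiv (Sum.inl i)).toLinearMap :
        Module.End ℂ (MvPolynomial (Fin n ⊕ Fin n) ℂ)) ^ k) f)

namespace MvPolynomial

open scoped IsMulCommutative

variable {σ R : Type*} [CommRing R]

theorem commute_pderiv (i j : σ) :
    Commute (pderiv i : Derivation R (MvPolynomial σ R) _).toLinearMap
      (pderiv j : Derivation R (MvPolynomial σ R) _).toLinearMap := by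
  classical
  have h : ⁅(pderiv i : Derivation R (MvPolynomial σ R) _), pderiv j⁆ = 0 :=
    derivation_ext fun k => by
      rw [Derivation.commutator_apply, pderiv_X, pderiv_X, Pi.single_apply, Pi.single_apply]
      split_ifs <;> simp
  refine LinearMap.ext fun f => ?_
  simpa [Derivation.commutator_apply, sub_eq_zero] using congr($h f)

-- `Module.End` is not commutative, so `p ↦ p(∂)` is built by `aeval` into this subalgebra.
variable (σ R) in
abbrev pderivAlgebra : Subalgebra R (Module.End R (MvPolynomial σ R)) :=
  Algebra.adjoin R (Set.range fun i => (pderiv i).toLinearMap)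

instance : IsMulCommutative (pderivAlgebra σ R) :=
  Algebra.isMulCommutative_adjoin R <| by
    rintro _ ⟨i, rfl⟩ _ ⟨j, rfl⟩
    exact commute_pderiv i j

def diffOp : MvPolynomial σ R →ₐ[R] Module.End R (MvPolynomial σ R) :=
  (pderivAlgebra σ R).val.comp <|
    aeval fun i => ⟨(pderiv i).toLinearMap, Algebra.subset_adjoin ⟨i, rfl⟩⟩

theorem diffOp_X (i : σ) : diffOp (X i : MvPolynomial σ R) = (pderiv i).toLinearMap := by
  simp [diffOp]

theorem commute_diffOp (p q : MvPolynomial σ R) : Commute (diffOp p) (diffOp q) := by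
  rw [Commute, SemiconjBy, ← map_mul, ← map_mul, mul_comm]

theorem diffOp_monomial [Fintype σ] (m : σ →₀ ℕ) (c : R) :
    diffOp (monomial m c) =
      c • (Finset.univ.toList.map fun i => (pderiv i).toLinearMap ^ m i).prod := by
  rw [diffOp, AlgHom.comp_apply, aeval_monomial, map_mul, AlgHom.commutes,
    Finsupp.prod_fintype _ _ fun _ => pow_zero _, ← Finset.prod_map_toList, map_list_prod,
    List.map_map, Algebra.algebraMap_eq_smul_one, smul_mul_assoc, one_mul]
  rfl

theorem pderiv_mul_mulLeft (i : σ) (g : MvPolynomial σ R) :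
    (pderiv i).toLinearMap * LinearMap.mulLeft R g =
      LinearMap.mulLeft R g * (pderiv i).toLinearMap + LinearMap.mulLeft R (pderiv i g) := by
  refine LinearMap.ext fun f => ?_
  simp only [LinearMap.add_apply, Module.End.mul_apply, LinearMap.mulLeft_apply,
    Derivation.coeFn_coe, pderiv_mul]
  ring

theorem diffOp_pderiv_X (i j : σ) :
    diffOp (pderiv j (X i : MvPolynomial σ R)) = LinearMap.mulLeft R (pderiv i (X j)) := by
  classical
  rw [pderiv_X, pderiv_X]
  rcases eq_or_ne i j with rfl | h
  · simp [Module.End.one_eq_id]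
  · simp [h, h.symm]

theorem diffOp_mul_mulLeft_X (p : MvPolynomial σ R) (j : σ) :
    diffOp p * LinearMap.mulLeft R (X j) =
      LinearMap.mulLeft R (X j) * diffOp p + diffOp (pderiv j p) := by
  induction p using MvPolynomial.induction_on with
  | C a => simp [Algebra.commutes]
  | add p q hp hq => simp only [map_add, add_mul, mul_add, hp, hq]; abel
  | mul_X p i ih =>
    rw [map_mul, diffOp_X, mul_assoc, pderiv_mul_mulLeft, mul_add, ← mul_assoc, ih,
      Derivation.leibniz, map_add, smul_eq_mul, smul_eq_mul, mul_comm (X i), map_mul, map_mul,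
      diffOp_X, diffOp_pderiv_X]
    noncomm_ring

end MvPolynomial

theorem apolar_eq_diffOp {σ : Type} [Fintype σ] (g f : MvPolynomial σ ℂ) :
    apolar g f = diffOp g f := by
  conv_rhs => rw [g.as_sum, map_sum, LinearMap.sum_apply]
  simp only [apolar, diffOp_monomial, LinearMap.smul_apply]

def polarizationAdjoint {R : Type*} [CommRing R] (n k : ℕ)
    (p : MvPolynomial (Fin n ⊕ Fin n) R) : MvPolynomial (Fin n ⊕ Fin n) R :=
  ∑ i, pderiv (Sum.inr i) p * X (Sum.inl i) ^ k

theorem InM.polarizationAdjoint {n k : ℕ} {p : MvPolynomial (Fin n ⊕ Fin n) ℂ} (hp : InM n p)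
    (hk : k ≠ 0) : InM n (polarizationAdjoint n k p) := by
  refine ⟨fun π => ?_, ?_⟩
  · have hrename (i : Fin n) :
        rename (Sum.map π π) (pderiv (Sum.inr i) p * X (Sum.inl i) ^ k) =
          pderiv (Sum.inr (π i)) p * X (Sum.inl (π i)) ^ k := by
      rw [map_mul, map_pow, rename_X, ← pderiv_rename (π.injective.sumMap π.injective), hp.1 π]
      rfl
    simp only [_root_.polarizationAdjoint, map_sum, hrename]
    exact Equiv.sum_comp π fun i => pderiv (Sum.inr i) p * X (Sum.inl i) ^ k
  · simp [_root_.polarizationAdjoint, zero_pow hk]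

theorem diffOp_Ek (n k : ℕ) (p f : MvPolynomial (Fin n ⊕ Fin n) ℂ) :
    diffOp p (Ek n k f) =
      ∑ i, X (Sum.inr i) * ((pderiv (Sum.inl i)).toLinearMap ^ k) (diffOp p f) +
        diffOp (polarizationAdjoint n k p) f := by
  have hterm (i : Fin n) :
      diffOp p (X (Sum.inr i) * ((pderiv (Sum.inl i)).toLinearMap ^ k) f) =
        X (Sum.inr i) * ((pderiv (Sum.inl i)).toLinearMap ^ k) (diffOp p f) +
          diffOp (pderiv (Sum.inr i) p * X (Sum.inl i) ^ k) f := by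
    have hpow : (pderiv (Sum.inl i)).toLinearMap ^ k =
        diffOp (X (Sum.inl i) ^ k : MvPolynomial (Fin n ⊕ Fin n) ℂ) := by
      rw [map_pow, diffOp_X]
    rw [← LinearMap.mulLeft_apply (R := ℂ), ← Module.End.mul_apply, diffOp_mul_mulLeft_X, hpow,
      map_mul, LinearMap.add_apply, Module.End.mul_apply, Module.End.mul_apply,
      LinearMap.mulLeft_apply, ← Module.End.mul_apply (diffOp p), (commute_diffOp _ _).eq,
      Module.End.mul_apply]
  simp only [Ek, map_sum, hterm, Finset.sum_add_distrib, polarizationAdjoint,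
    LinearMap.sum_apply]

/-- the space of diagonal harmonics is closed under each
polarization operator E_k, k > 0. -/
theorem stmt_7 (n k : ℕ) (hk : 0 < k) (f : MvPolynomial (Fin n ⊕ Fin n) ℂ)
    (hf : f ∈ DH n) : Ek n k f ∈ DH n := by
  intro p hp
  have hf' : ∀ q, InM n q → diffOp q f = 0 := fun q hq => apolar_eq_diffOp q f ▸ hf q hq
  rw [apolar_eq_diffOp, diffOp_Ek, hf' p hp, hf' _ (hp.polarizationAdjoint hk.ne')]
  simp

end
end
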